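/- arXiv:2306.14718 — 6 statements merged into one kernel-verified Lean document; each statement's English description precedes it below -/
import Mathlib

section
/- Let α, β, γ, δ > 0. Define F(q) = h(α − αq) + h(β + αq) + h(γ + αq) + h(δ + βq) + h(δ + γq) − h(δ + αq + βq + γq), where h(x) = −x log x. Then F(0) = h(α) + h(β) + h(γ) + h(δ) and F'(0) = α·log(αδ/(βγ)). In particular, if αδ < βγ, then F(q) < F(0) for all sufficiently small q > 0. -/
open Real Set

lemma HasDerivAt.eventually_lt_of_deriv_neg {f : ℝ → ℝ} {f' x : ℝ} (hf : HasDerivAt f f' x)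
    (hf' : f' < 0) : ∀ᶠ y in nhdsWithin x (Ioi x), f y < f x := by
  filter_upwards [hf.hasDerivWithinAt.limsup_slope_le' (lt_irrefl x) hf', self_mem_nhdsWithin]
    with y hslope hxy
  exact (slope_neg_iff_of_le (le_of_lt hxy)).1 hslope

lemma hasDerivAt_negMulLog_affine {c : ℝ} (hc : c ≠ 0) (d : ℝ) :
    HasDerivAt (fun q ↦ negMulLog (c + d * q)) ((-log c - 1) * d) 0 := by
  have hlin : HasDerivAt (fun q ↦ c + d * q) d 0 := by
    simpa using ((hasDerivAt_id (0 : ℝ)).const_mul d).const_add c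
  exact (hasDerivAt_negMulLog (by simpa using hc)).comp_of_eq 0 hlin (by simp)

/-- For positive `α β γ δ`, the function
`F q = h(α-αq)+h(β+αq)+h(γ+αq)+h(δ+βq)+h(δ+γq)-h(δ+αq+βq+γq)`
(with `h x = -x log x`) satisfies `F 0 = h α + h β + h γ + h δ`,
`F' 0 = α·log(αδ/(βγ))`, and if `αδ < βγ` then `F q < F 0` for all
sufficiently small `q > 0`. -/
theorem stmt2 (α β γ δ : ℝ) (hα : 0 < α) (hβ : 0 < β) (hγ : 0 < γ) (hδ : 0 < δ)
    (h : ℝ → ℝ) (hh : ∀ t, h t = -t * Real.log t)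
    (F : ℝ → ℝ)
    (hF : ∀ q, F q = h (α - α*q) + h (β + α*q) + h (γ + α*q) + h (δ + β*q)
      + h (δ + γ*q) - h (δ + α*q + β*q + γ*q)) :
    F 0 = h α + h β + h γ + h δ ∧
    HasDerivAt F (α * Real.log (α * δ / (β * γ))) 0 ∧
    (α * δ < β * γ → ∀ᶠ q in nhdsWithin 0 (Set.Ioi 0), F q < F 0) := by
  obtain rfl : h = negMulLog := funext hh
  have hF' : F = fun q ↦ negMulLog (α + -α * q) + negMulLog (β + α * q)
      + negMulLog (γ + α * q) + negMulLog (δ + β * q) + negMulLog (δ + γ * q)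
      - negMulLog (δ + (α + β + γ) * q) :=
    funext fun q ↦ by rw [hF]; ring_nf
  have hderiv : HasDerivAt F (α * log (α * δ / (β * γ))) 0 := by
    rw [hF']
    refine ((((((hasDerivAt_negMulLog_affine hα.ne' (-α)).add
      (hasDerivAt_negMulLog_affine hβ.ne' α)).add (hasDerivAt_negMulLog_affine hγ.ne' α)).add
      (hasDerivAt_negMulLog_affine hδ.ne' β)).add (hasDerivAt_negMulLog_affine hδ.ne' γ)).sub
      (hasDerivAt_negMulLog_affine hδ.ne' (α + β + γ))).congr_deriv ?_
    rw [log_div (by positivity) (by positivity), log_mul hα.ne' hδ.ne', log_mul hβ.ne' hγ.ne']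
    ring
  refine ⟨by rw [hF]; simp, hderiv, fun hlt ↦ hderiv.eventually_lt_of_deriv_neg ?_⟩
  exact mul_neg_of_pos_of_neg hα <| log_neg (by positivity) <| (div_lt_one (by positivity)).2 hlt
end

section
/- Let α, β, γ > 0. Define G(q) = h(α − αq) + h(β + αq) + h(γ + αq) + q·h(β) + q·h(γ) − q·h(α+β+γ) − α·h(q), where h(x) = −x log x. Then G(0) = h(α) + h(β) + h(γ) and G(q) < G(0) for all sufficiently small q > 0. -/
/-!
Write `G q = Φ q - α · h q`, where `Φ` collects the terms whose arguments stay near the positive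
numbers `α, β, γ`, so that `Φ` is differentiable at `0` and `G 0 = Φ 0`. Then
`(G q - G 0) / q = slope Φ 0 q + α log q`: the slope stays bounded while `α log q → -∞`.
-/

open Real Set Filter Topology

theorem eventually_sub_mul_negMulLog_lt {Φ : ℝ → ℝ} {a : ℝ}
    (hΦ : DifferentiableWithinAt ℝ Φ (Ioi 0) 0) (ha : 0 < a) :
    ∀ᶠ q in 𝓝[>] 0, Φ q - a * negMulLog q < Φ 0 := by
  have hslope : Tendsto (slope Φ 0) (𝓝[>] 0) (𝓝 (derivWithin Φ (Ioi 0) 0)) :=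
    (hasDerivWithinAt_iff_tendsto_slope' (lt_irrefl 0)).1 hΦ.hasDerivWithinAt
  have hbot : Tendsto (fun q ↦ slope Φ 0 q + a * log q) (𝓝[>] 0) atBot :=
    hslope.add_atBot (tendsto_log_nhdsGT_zero.const_mul_atBot ha)
  filter_upwards [hbot.eventually (eventually_lt_atBot 0), self_mem_nhdsWithin]
    with q hneg (hq : 0 < q)
  have key : Φ q - a * negMulLog q - Φ 0 = q * (slope Φ 0 q + a * log q) := by
    rw [slope_def_field, negMulLog]
    field_simp [hq.ne']
    ring
  nlinarith [mul_neg_of_pos_of_neg hq hneg]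

/-- For positive `α β γ`, the function
`G q = h(α-αq)+h(β+αq)+h(γ+αq)+q·h β+q·h γ-q·h(α+β+γ)-α·h q`
(with `h x = -x log x`) satisfies `G 0 = h α + h β + h γ` and
`G q < G 0` for all sufficiently small `q > 0`. -/
theorem stmt3 (α β γ : ℝ) (hα : 0 < α) (hβ : 0 < β) (hγ : 0 < γ)
    (h : ℝ → ℝ) (hh : ∀ t, h t = -t * Real.log t)
    (G : ℝ → ℝ)
    (hG : ∀ q, G q = h (α - α*q) + h (β + α*q) + h (γ + α*q)
      + q * h β + q * h γ - q * h (α + β + γ) - α * h q) :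
    G 0 = h α + h β + h γ ∧
    (∀ᶠ q in nhdsWithin 0 (Set.Ioi 0), G q < G 0) := by
  obtain rfl : h = negMulLog := funext hh
  have hG0 : G 0 = negMulLog α + negMulLog β + negMulLog γ := by simp [hG]
  refine ⟨hG0, ?_⟩
  set Φ : ℝ → ℝ := fun q ↦ negMulLog (α - α*q) + negMulLog (β + α*q) + negMulLog (γ + α*q)
      + q * (negMulLog β + negMulLog γ - negMulLog (α + β + γ))
  have hΦ : DifferentiableAt ℝ Φ 0 := by
    fun_prop (disch := simp; positivity)
  filter_upwards [eventually_sub_mul_negMulLog_lt hΦ.differentiableWithinAt hα] with q hq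
  convert hq using 1
  · rw [hG]; ring
  · simp [Φ, hG0]
end

section
/- Let φ and ψ be real-valued functionals of joint distributions such that φ depends only on the marginal of (A,B) and ψ depends only on the marginal of (B,C). Suppose for some constant k ≥ 0 the inequality φ + ψ ≥ −k·I(A;C|B) holds for every joint distribution of (A,B,C) on given finite alphabets. Then φ + ψ ≥ 0 holds for every joint distribution of (A,B,C) on those alphabets. -/
/-!
Replace `p` by its Markov copy `p'(a,b,c) = p(a,b) p(b,c) / p(b)`. It has the same `(A,B)` and
`(B,C)` marginals, so `φ` and `ψ` do not change, and for each `b` its entropy splits as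
`H(A,C | B = b) = H(A | B = b) + H(C | B = b)`, so `I(A;C|B) = 0` under `p'`. The hypothesis at
`p'` then reads `φ + ψ ≥ 0`.
-/

open Real BigOperators Finset

section Defs
variable {Ω : Type} [Fintype Ω]

/-- `p` is a probability mass function on the finite sample space `Ω`. -/
def IsPmf (p : Ω → ℝ) : Prop := (∀ ω, 0 ≤ p ω) ∧ ∑ ω, p ω = 1

/-- Distribution of the random variable `f` under `p`. -/
noncomputable def distOf (p : Ω → ℝ) {α : Type} [Fintype α] [DecidableEq α]
    (f : Ω → α) : α → ℝ := fun a => ∑ ω, if f ω = a then p ω else 0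

/-- Shannon entropy (in nats) of the random variable `f` under `p`. -/
noncomputable def ent (p : Ω → ℝ) {α : Type} [Fintype α] [DecidableEq α]
    (f : Ω → α) : ℝ := ∑ a, Real.negMulLog (distOf p f a)

/-- Mutual information `I(f;g)` under `p`. -/
noncomputable def mi (p : Ω → ℝ) {α β : Type} [Fintype α] [DecidableEq α]
    [Fintype β] [DecidableEq β] (f : Ω → α) (g : Ω → β) : ℝ :=
  ent p f + ent p g - ent p (fun ω => (f ω, g ω))

/-- Conditional mutual information `I(f;g|h)` under `p`. -/
noncomputable def cmi (p : Ω → ℝ) {α β γ : Type} [Fintype α] [DecidableEq α]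
    [Fintype β] [DecidableEq β] [Fintype γ] [DecidableEq γ]
    (f : Ω → α) (g : Ω → β) (h : Ω → γ) : ℝ :=
  ent p (fun ω => (f ω, h ω)) + ent p (fun ω => (g ω, h ω))
    - ent p (fun ω => (f ω, g ω, h ω)) - ent p h

end Defs

/-- Tension region of `(X,Y)`: the set of triples
`(I(X;Z|Y), I(Y;Z|X), I(X;Y|Z))` as `Z` ranges over all finitely supported
random variables jointly distributed with `(X,Y)`. -/
def tension {Ω : Type} [Fintype Ω] {α β : Type} [Fintype α] [DecidableEq α]
    [Fintype β] [DecidableEq β] (p : Ω → ℝ) (X : Ω → α) (Y : Ω → β) :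
    Set (ℝ × ℝ × ℝ) :=
  { t | ∃ (m : ℕ) (q : α × β × Fin m → ℝ), IsPmf q ∧
      distOf q (fun w => (w.1, w.2.1)) = distOf p (fun ω => (X ω, Y ω)) ∧
      t = (cmi q (fun w => w.1) (fun w => w.2.2) (fun w => w.2.1),
           cmi q (fun w => w.2.1) (fun w => w.2.2) (fun w => w.1),
           cmi q (fun w => w.1) (fun w => w.2.1) (fun w => w.2.2)) }

variable {A B C : Type} [Fintype A] [DecidableEq A] [Fintype B] [DecidableEq B]
  [Fintype C] [DecidableEq C]

noncomputable def m12 (p : A × B × C → ℝ) (a : A) (b : B) : ℝ := ∑ c, p (a, b, c)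
noncomputable def m23 (p : A × B × C → ℝ) (b : B) (c : C) : ℝ := ∑ a, p (a, b, c)

lemma mul_negMulLog_div (x z : ℝ) (hz : z ≠ 0) :
    z * negMulLog (x / z) = negMulLog x + x * log z := by
  rcases eq_or_ne x 0 with rfl | hx
  · simp
  · rw [negMulLog, negMulLog, log_div hx hz]
    field_simp
    ring

lemma sum_sum_negMulLog_mul_div {ι κ : Type*} [Fintype ι] [Fintype κ] {x : ι → ℝ} {y : κ → ℝ}
    {s : ℝ} (hx : ∀ i, 0 ≤ x i) (hy : ∀ j, 0 ≤ y j) (hxs : ∑ i, x i = s) (hys : ∑ j, y j = s) :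
    ∑ i, ∑ j, negMulLog (x i * y j / s)
      = ∑ i, negMulLog (x i) + ∑ j, negMulLog (y j) - negMulLog s := by
  by_cases hs : s = 0
  · subst hs
    have hx0 : ∀ i, x i = 0 :=
      fun i => (sum_eq_zero_iff_of_nonneg fun i _ => hx i).1 hxs i (mem_univ i)
    have hy0 : ∀ j, y j = 0 :=
      fun j => (sum_eq_zero_iff_of_nonneg fun j _ => hy j).1 hys j (mem_univ j)
    simp [hx0, hy0]
  calc ∑ i, ∑ j, negMulLog (x i * y j / s)
      = ∑ i, ∑ j, (y j / s * negMulLog (x i) + x i * negMulLog (y j / s)) := by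
        simp only [mul_div_assoc, negMulLog_mul]
    _ = ∑ i, negMulLog (x i) + s * ∑ j, negMulLog (y j / s) := by
        simp only [sum_add_distrib, ← sum_mul, ← mul_sum, ← sum_div, hxs, hys, div_self hs,
          one_mul]
    _ = ∑ i, negMulLog (x i) + ∑ j, negMulLog (y j) - negMulLog s := by
        rw [mul_sum, sum_congr rfl fun j _ => mul_negMulLog_div (y j) s hs, sum_add_distrib,
          ← sum_mul, hys, negMulLog]
        ring

section Marginals
variable {α β γ : Type} [Fintype α] [Fintype γ]

noncomputable def m2 (p : α × β × γ → ℝ) (b : β) : ℝ := ∑ a, m12 p a b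

lemma sum_m23 (p : α × β × γ → ℝ) (b : β) : ∑ c, m23 p b c = m2 p b := by
  simp only [m2, m12, m23]
  exact sum_comm

lemma sum_m12 [Fintype β] (p : α × β × γ → ℝ) : ∑ a, ∑ b, m12 p a b = ∑ x, p x := by
  simp only [m12, Fintype.sum_prod_type]

variable [Fintype β] [DecidableEq β] (p : α × β × γ → ℝ)

lemma distOf_ab [DecidableEq α] (a : α) (b : β) :
    distOf p (fun x => (x.1, x.2.1)) (a, b) = m12 p a b := by
  simp only [distOf, Fintype.sum_prod_type, Prod.mk.injEq, ite_and]
  rw [Fintype.sum_eq_single a (by simp_all), sum_comm]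
  simp [m12]

lemma distOf_cb [DecidableEq γ] (c : γ) (b : β) :
    distOf p (fun x => (x.2.2, x.2.1)) (c, b) = m23 p b c := by
  simp only [distOf, Fintype.sum_prod_type, Prod.mk.injEq, ite_and]
  simp [m23]

lemma distOf_acb [DecidableEq α] [DecidableEq γ] (a : α) (c : γ) (b : β) :
    distOf p (fun x => (x.1, x.2.2, x.2.1)) (a, c, b) = p (a, b, c) := by
  simp only [distOf, Fintype.sum_prod_type, Prod.mk.injEq, ite_and]
  simp

lemma distOf_b (b : β) : distOf p (fun x => x.2.1) b = m2 p b := by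
  simp only [distOf, Fintype.sum_prod_type, m2, m12]
  refine sum_congr rfl fun a _ => ?_
  rw [sum_comm]
  simp

lemma cmi_eq_sum [DecidableEq α] [DecidableEq γ] :
    cmi p (fun x => x.1) (fun x => x.2.2) (fun x => x.2.1) =
      ∑ b, (∑ a, negMulLog (m12 p a b) + ∑ c, negMulLog (m23 p b c)
        - ∑ a, ∑ c, negMulLog (p (a, b, c)) - negMulLog (m2 p b)) := by
  simp only [cmi, ent, Fintype.sum_prod_type, distOf_ab, distOf_cb, distOf_acb, distOf_b]
  rw [sum_comm (γ := α), sum_comm (γ := γ)]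
  simp only [sum_add_distrib, sum_sub_distrib]
  congr 2
  exact (sum_congr rfl fun _ _ => sum_comm).trans sum_comm

end Marginals

section MarkovCopy
variable {α β γ : Type} [Fintype α] [Fintype γ] {p : α × β × γ → ℝ}

lemma m12_eq_zero_of_m2_eq_zero (hp : ∀ x, 0 ≤ p x) {b : β} (hb : m2 p b = 0) (a : α) :
    m12 p a b = 0 :=
  (sum_eq_zero_iff_of_nonneg fun a _ => sum_nonneg fun c _ => hp (a, b, c)).1 hb a (mem_univ a)

lemma m23_eq_zero_of_m2_eq_zero (hp : ∀ x, 0 ≤ p x) {b : β} (hb : m2 p b = 0) (c : γ) :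
    m23 p b c = 0 := by
  rw [← sum_m23] at hb
  exact (sum_eq_zero_iff_of_nonneg fun c _ => sum_nonneg fun a _ => hp (a, b, c)).1 hb c
    (mem_univ c)

/-- `p(a,b) p(b,c) / p(b)`. Where `p(b) = 0` the convention `x / 0 = 0` gives `0`, which is right
because then `p(a,b) = 0`. -/
noncomputable def markovCopy (p : α × β × γ → ℝ) (x : α × β × γ) : ℝ :=
  m12 p x.1 x.2.1 * m23 p x.2.1 x.2.2 / m2 p x.2.1

lemma m12_markovCopy (hp : ∀ x, 0 ≤ p x) (a : α) (b : β) :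
    m12 (markovCopy p) a b = m12 p a b := by
  simp only [m12, markovCopy]
  rw [← sum_div, ← mul_sum, sum_m23]
  exact mul_div_cancel_of_imp fun hb => m12_eq_zero_of_m2_eq_zero hp hb a

lemma m23_markovCopy (hp : ∀ x, 0 ≤ p x) (b : β) (c : γ) :
    m23 (markovCopy p) b c = m23 p b c := by
  simp only [m23, markovCopy]
  rw [← sum_div, ← sum_mul, mul_comm]
  exact mul_div_cancel_of_imp fun hb => m23_eq_zero_of_m2_eq_zero hp hb c

lemma m2_markovCopy (hp : ∀ x, 0 ≤ p x) (b : β) : m2 (markovCopy p) b = m2 p b :=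
  sum_congr rfl fun a _ => m12_markovCopy hp a b

lemma isPmf_markovCopy [Fintype β] (hp : IsPmf p) : IsPmf (markovCopy p) := by
  refine ⟨fun x => div_nonneg (mul_nonneg ?_ ?_) ?_, ?_⟩
  · exact sum_nonneg fun _ _ => hp.1 _
  · exact sum_nonneg fun _ _ => hp.1 _
  · exact sum_nonneg fun _ _ => sum_nonneg fun _ _ => hp.1 _
  · rw [← sum_m12, ← hp.2, ← sum_m12]
    simp only [m12_markovCopy hp.1]

lemma cmi_markovCopy [Fintype β] [DecidableEq α] [DecidableEq β] [DecidableEq γ]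
    (hp : ∀ x, 0 ≤ p x) :
    cmi (markovCopy p) (fun x => x.1) (fun x => x.2.2) (fun x => x.2.1) = 0 := by
  rw [cmi_eq_sum]
  refine sum_eq_zero fun b _ => ?_
  simp only [m12_markovCopy hp, m23_markovCopy hp, m2_markovCopy hp, markovCopy]
  rw [sum_sum_negMulLog_mul_div (x := fun a => m12 p a b) (y := fun c => m23 p b c) (s := m2 p b)
    (fun a => sum_nonneg fun c _ => hp (a, b, c)) (fun c => sum_nonneg fun a _ => hp (a, b, c))
    rfl (sum_m23 p b)]
  ring

end MarkovCopy

theorem stmt6_general (φ ψ : (A × B × C → ℝ) → ℝ) (k : ℝ)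
    (hφ : ∀ p q : A × B × C → ℝ, IsPmf p → IsPmf q →
      (∀ a b, m12 p a b = m12 q a b) → φ p = φ q)
    (hψ : ∀ p q : A × B × C → ℝ, IsPmf p → IsPmf q →
      (∀ b c, m23 p b c = m23 q b c) → ψ p = ψ q)
    (hineq : ∀ p : A × B × C → ℝ, IsPmf p →
      φ p + ψ p ≥ -k * cmi p (fun x => x.1) (fun x => x.2.2) (fun x => x.2.1)) :
    ∀ p : A × B × C → ℝ, IsPmf p → φ p + ψ p ≥ 0 := by
  intro p hp
  have hq := isPmf_markovCopy hp
  have hφq := hφ p _ hp hq fun a b => (m12_markovCopy hp.1 a b).symm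
  have hψq := hψ p _ hp hq fun b c => (m23_markovCopy hp.1 b c).symm
  simpa [hφq, hψq, cmi_markovCopy hp.1] using hineq _ hq

/-- If `φ` depends only on the `(A,B)` marginal, `ψ` only on the `(B,C)`
marginal, and `φ + ψ ≥ -k·I(A;C|B)` for every joint distribution (with
`k ≥ 0`), then `φ + ψ ≥ 0` for every joint distribution. -/
theorem stmt6 (φ ψ : (A × B × C → ℝ) → ℝ) (k : ℝ) (hk : 0 ≤ k)
    (hφ : ∀ p q : A × B × C → ℝ, IsPmf p → IsPmf q →
      (∀ a b, m12 p a b = m12 q a b) → φ p = φ q)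
    (hψ : ∀ p q : A × B × C → ℝ, IsPmf p → IsPmf q →
      (∀ b c, m23 p b c = m23 q b c) → ψ p = ψ q)
    (hineq : ∀ p : A × B × C → ℝ, IsPmf p →
      φ p + ψ p ≥ -k * cmi p (fun x => x.1) (fun x => x.2.2) (fun x => x.2.1)) :
    ∀ p : A × B × C → ℝ, IsPmf p → φ p + ψ p ≥ 0 :=
  stmt6_general φ ψ k hφ hψ hineq
end

section
/- For any jointly distributed finitely supported random variables U, V, X, Y, Z, the inequality Ing(U,V,X,Y) + Δ(X,Y,Z) ≥ −3·I(U,V ; Z | X,Y) holds, where Ing(U,V,X,Y) = −I(X;Y) + I(X;Y|U) + I(X;Y|V) + I(U;V) and Δ(X,Y,Z) = I(X;Z|Y) + I(Y;Z|X) + I(X;Y|Z). -/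
open Real BigOperators Finset

/-!
If `Z` were a common information of `X` and `Y`, the Ingleton inequality would follow as in
Hammer–Romashchenko–Shen–Vereshchagin: `I(X;Y) = I(Z;XY)` is at most
`I(Z;XY|U) + I(Z;XY|V) + I(U;V)`, and each `I(Z;XY|W)` is at most `I(X;Y|W)`. Run with exact
Shannon identities instead, every step leaves an error made of the terms of `Δ(X,Y,Z)` and of
`I(U;Z|XY)`, `I(V;Z|XY)`, `I(UV;Z|XY)`, which add up to the stated slack. All the inequalities
used are instances of the nonnegativity of conditional mutual information (Gibbs' inequality).
-/

section Distribution
variable {Ω α β : Type} [Fintype Ω] [Fintype α] [DecidableEq α] [Fintype β] [DecidableEq β]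

theorem sum_distOf_mul (p : Ω → ℝ) (f : Ω → α) (φ : α → ℝ) :
    ∑ a, distOf p f a * φ a = ∑ ω, p ω * φ (f ω) := by
  simp only [distOf, Finset.sum_mul, ite_mul, zero_mul]
  rw [Finset.sum_comm]
  simp

theorem sum_distOf (p : Ω → ℝ) (f : Ω → α) : ∑ a, distOf p f a = ∑ ω, p ω := by
  simpa using sum_distOf_mul p f 1

theorem distOf_nonneg {p : Ω → ℝ} (hp : ∀ ω, 0 ≤ p ω) (f : Ω → α) (a : α) :
    0 ≤ distOf p f a :=
  Finset.sum_nonneg fun ω _ => by split_ifs <;> simp [hp ω]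

theorem le_distOf_apply {p : Ω → ℝ} (hp : ∀ ω, 0 ≤ p ω) (f : Ω → α) (ω : Ω) :
    p ω ≤ distOf p f (f ω) := by
  have := Finset.single_le_sum (f := fun ω' => if f ω' = f ω then p ω' else 0)
    (fun ω' _ => by split_ifs <;> simp [hp ω']) (Finset.mem_univ ω)
  simpa [distOf] using this

theorem sum_distOf_pair_fst (p : Ω → ℝ) (f : Ω → α) (g : Ω → β) (b : β) :
    ∑ a, distOf p (fun ω => (f ω, g ω)) (a, b) = distOf p g b := by
  simp only [distOf, Prod.mk.injEq]
  rw [Finset.sum_comm]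
  refine Finset.sum_congr rfl fun ω _ => ?_
  by_cases hb : g ω = b <;> simp [hb]

theorem ent_eq_neg_sum (p : Ω → ℝ) (f : Ω → α) :
    ent p f = -∑ ω, p ω * Real.log (distOf p f (f ω)) := by
  rw [ent, ← sum_distOf_mul p f fun a => Real.log (distOf p f a), ← Finset.sum_neg_distrib]
  simp [Real.negMulLog]

end Distribution

section Gibbs
variable {Ω α β γ : Type} [Fintype Ω] [Fintype α] [DecidableEq α] [Fintype β]
  [DecidableEq β] [Fintype γ] [DecidableEq γ]

theorem sum_distOf_mul_distOf_div_distOf (p : Ω → ℝ) (f : Ω → α) (g : Ω → β)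
    (h : Ω → γ) :
    ∑ z : α × β × γ, distOf p (fun ω => (f ω, h ω)) (z.1, z.2.2)
      * distOf p (fun ω => (g ω, h ω)) z.2 / distOf p h z.2.2 = ∑ ω, p ω := by
  calc _ = ∑ c, (∑ a, distOf p (fun ω => (f ω, h ω)) (a, c))
        * (∑ b, distOf p (fun ω => (g ω, h ω)) (b, c)) / distOf p h c := by
        simp only [Fintype.sum_prod_type, Finset.sum_mul_sum, Finset.sum_div]
        exact (Finset.sum_congr rfl fun _ _ => Finset.sum_comm).trans Finset.sum_comm
    _ = ∑ c, distOf p h c := by simp only [sum_distOf_pair_fst, mul_self_div_self]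
    _ = ∑ ω, p ω := sum_distOf p h

theorem sum_mul_distOf_div_distOf_le_one {p : Ω → ℝ} (hp : IsPmf p)
    (f : Ω → α) (g : Ω → β) (h : Ω → γ) :
    ∑ ω, p ω * (distOf p (fun ω => (f ω, h ω)) (f ω, h ω)
      * distOf p (fun ω => (g ω, h ω)) (g ω, h ω)
      / (distOf p (fun ω => (f ω, g ω, h ω)) (f ω, g ω, h ω) * distOf p h (h ω)))
      ≤ 1 := by
  set r := distOf p (fun ω => (f ω, g ω, h ω))
  rw [← hp.2, ← sum_distOf_mul_distOf_div_distOf p f g h,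
    ← sum_distOf_mul p (fun ω => (f ω, g ω, h ω)) fun z =>
      distOf p (fun ω => (f ω, h ω)) (z.1, z.2.2) * distOf p (fun ω => (g ω, h ω)) z.2
        / (r z * distOf p h z.2.2)]
  refine Finset.sum_le_sum fun z _ => ?_
  rcases (distOf_nonneg hp.1 _ z).eq_or_lt with hz | hz
  · rw [← hz, zero_mul]
    exact div_nonneg (mul_nonneg (distOf_nonneg hp.1 _ _) (distOf_nonneg hp.1 _ _))
      (distOf_nonneg hp.1 _ _)
  · rw [mul_div_assoc']
    exact (mul_div_mul_left _ _ hz.ne').le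

theorem cmi_eq_sum_mul_log (p : Ω → ℝ) (f : Ω → α) (g : Ω → β) (h : Ω → γ) :
    cmi p f g h = ∑ ω, p ω *
      (Real.log (distOf p (fun ω => (f ω, g ω, h ω)) (f ω, g ω, h ω))
      + Real.log (distOf p h (h ω)) - Real.log (distOf p (fun ω => (f ω, h ω)) (f ω, h ω))
      - Real.log (distOf p (fun ω => (g ω, h ω)) (g ω, h ω))) := by
  simp only [cmi, ent_eq_neg_sum, mul_add, mul_sub, Finset.sum_add_distrib,
    Finset.sum_sub_distrib]
  ring

theorem cmi_nonneg {p : Ω → ℝ} (hp : IsPmf p) (f : Ω → α) (g : Ω → β) (h : Ω → γ) :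
    0 ≤ cmi p f g h := by
  rw [cmi_eq_sum_mul_log]
  have mass := sum_mul_distOf_div_distOf_le_one hp f g h
  set r := distOf p (fun ω => (f ω, g ω, h ω))
  set s := distOf p (fun ω => (f ω, h ω))
  set t := distOf p (fun ω => (g ω, h ω))
  set q := distOf p h
  -- `log x ≤ x - 1` at `x = P(f|h) P(g|h) / P(f,g|h)`, evaluated along the sample
  have gibbs : ∀ ω,
      p ω - p ω * (s (f ω, h ω) * t (g ω, h ω) / (r (f ω, g ω, h ω) * q (h ω)))
      ≤ p ω * (Real.log (r (f ω, g ω, h ω)) + Real.log (q (h ω))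
        - Real.log (s (f ω, h ω)) - Real.log (t (g ω, h ω))) := by
    intro ω
    rcases (hp.1 ω).eq_or_lt with h0 | hpos
    · simp [← h0]
    have hr := hpos.trans_le (le_distOf_apply hp.1 (fun ω => (f ω, g ω, h ω)) ω)
    have hs := hpos.trans_le (le_distOf_apply hp.1 (fun ω => (f ω, h ω)) ω)
    have ht := hpos.trans_le (le_distOf_apply hp.1 (fun ω => (g ω, h ω)) ω)
    have hq := hpos.trans_le (le_distOf_apply hp.1 h ω)
    have hlog := Real.log_le_sub_one_of_pos (by positivity :
      0 < s (f ω, h ω) * t (g ω, h ω) / (r (f ω, g ω, h ω) * q (h ω)))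
    rw [Real.log_div (by positivity) (by positivity), Real.log_mul hs.ne' ht.ne',
      Real.log_mul hr.ne' hq.ne'] at hlog
    nlinarith
  calc (0 : ℝ) ≤ ∑ ω, p ω - ∑ ω, p ω * (s (f ω, h ω) * t (g ω, h ω)
        / (r (f ω, g ω, h ω) * q (h ω))) := by rw [hp.2]; linarith
    _ ≤ _ := by rw [← Finset.sum_sub_distrib]; exact Finset.sum_le_sum fun ω _ => gibbs ω

end Gibbs

/-! Each inequality below is the sum of the displayed instances of `cmi_nonneg` and of an
identity between entropies. Expanding every entropy with `ent_eq_neg_sum` and sorting the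
conjunctions that describe joint events makes the entropies of reordered tuples syntactically
equal, after which the identity is linear arithmetic. -/

section Shannon
variable {Ω α β γ δ : Type} [Fintype Ω] [Fintype α] [DecidableEq α] [Fintype β]
  [DecidableEq β] [Fintype γ] [DecidableEq γ] [Fintype δ] [DecidableEq δ]

theorem mi_pair_add_cmi (p : Ω → ℝ) (X : Ω → α) (Y : Ω → β) (Z : Ω → γ) :
    mi p Z (fun ω => (X ω, Y ω)) + cmi p X Y Z = mi p X Y + cmi p X Z Y + cmi p Y Z X := by
  simp only [mi, cmi, ent_eq_neg_sum, distOf, Prod.mk.injEq, and_assoc, and_comm, and_left_comm]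
  ring

theorem mi_add_cmi_add_cmi_le {p : Ω → ℝ} (hp : IsPmf p)
    (U : Ω → α) (V : Ω → β) (Z : Ω → γ) (S : Ω → δ) :
    mi p Z S + cmi p U Z S + cmi p V Z S
      ≤ cmi p Z S U + cmi p Z S V + mi p U V + cmi p (fun ω => (U ω, V ω)) Z S := by
  have h₁ := cmi_nonneg hp U V Z
  have h₂ := cmi_nonneg hp Z S fun ω => (U ω, V ω)
  simp only [mi, cmi, ent_eq_neg_sum, distOf, Prod.mk.injEq, and_assoc, and_comm,
    and_left_comm] at h₁ h₂ ⊢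
  linarith

theorem cmi_pair_le {p : Ω → ℝ} (hp : IsPmf p)
    (X : Ω → α) (Y : Ω → β) (Z : Ω → γ) (W : Ω → δ) :
    cmi p Z (fun ω => (X ω, Y ω)) W
      ≤ cmi p X Y W + cmi p X Z Y + cmi p Y Z X + 2 * cmi p W Z (fun ω => (X ω, Y ω)) := by
  have h₁ := cmi_nonneg hp X Y fun ω => (Z ω, W ω)
  have h₂ := cmi_nonneg hp W Z Y
  have h₃ := cmi_nonneg hp W Z X
  simp only [cmi, ent_eq_neg_sum, distOf, Prod.mk.injEq, and_assoc, and_comm,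
    and_left_comm] at h₁ h₂ h₃ ⊢
  linarith

theorem cmi_fst_le_cmi_pair {p : Ω → ℝ} (hp : IsPmf p)
    (U : Ω → α) (V : Ω → β) (Z : Ω → γ) (S : Ω → δ) :
    cmi p U Z S ≤ cmi p (fun ω => (U ω, V ω)) Z S := by
  have h := cmi_nonneg hp V Z fun ω => (U ω, S ω)
  simp only [cmi, ent_eq_neg_sum, distOf, Prod.mk.injEq, and_assoc, and_left_comm] at h ⊢
  linarith

theorem cmi_snd_le_cmi_pair {p : Ω → ℝ} (hp : IsPmf p)
    (U : Ω → α) (V : Ω → β) (Z : Ω → γ) (S : Ω → δ) :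
    cmi p V Z S ≤ cmi p (fun ω => (U ω, V ω)) Z S := by
  have h := cmi_nonneg hp U Z fun ω => (V ω, S ω)
  simp only [cmi, ent_eq_neg_sum, distOf, Prod.mk.injEq, and_assoc, and_left_comm] at h ⊢
  linarith

end Shannon

/-- `Ing(U,V,X,Y) + Δ(X,Y,Z) ≥ -3·I(UV;Z|XY)` is a Shannon inequality. -/
theorem stmt7 {Ω αU αV αX αY αZ : Type} [Fintype Ω]
    [Fintype αU] [DecidableEq αU] [Fintype αV] [DecidableEq αV]
    [Fintype αX] [DecidableEq αX] [Fintype αY] [DecidableEq αY]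
    [Fintype αZ] [DecidableEq αZ]
    (p : Ω → ℝ) (hp : IsPmf p)
    (U : Ω → αU) (V : Ω → αV) (X : Ω → αX) (Y : Ω → αY) (Z : Ω → αZ) :
    (-(mi p X Y) + cmi p X Y U + cmi p X Y V + mi p U V)
      + (cmi p X Z Y + cmi p Y Z X + cmi p X Y Z)
    ≥ -3 * cmi p (fun ω => (U ω, V ω)) Z (fun ω => (X ω, Y ω)) := by
  have hΔ := mi_pair_add_cmi p X Y Z
  have hHammer := mi_add_cmi_add_cmi_le hp U V Z fun ω => (X ω, Y ω)
  have hU := cmi_pair_le hp X Y Z U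
  have hV := cmi_pair_le hp X Y Z V
  have hUV₁ := cmi_fst_le_cmi_pair hp U V Z fun ω => (X ω, Y ω)
  have hUV₂ := cmi_snd_le_cmi_pair hp U V Z fun ω => (X ω, Y ω)
  linarith
end

section
/- The tension region T(X;Y) of two finitely supported random variables is a convex subset of ℝ³. -/
open Real BigOperators Finset

/-!
Time sharing. Given auxiliary variables `Z₁`, `Z₂` realizing two points of `T(X;Y)`, toss an
independent coin with bias `l` and let `Z` be `Z₁` or `Z₂` accordingly, tagged so that `Z`
reveals the coin. Since `(X,Y)` has the same law under both couplings, the entropy of any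
function of `(X,Y)` is unchanged, while every entropy involving `Z` becomes the `l`-average plus
the entropy of the coin. In each of the three conditional mutual informations the coin terms
cancel, so all three are averaged exactly.
-/
section Entropy
variable {Ω Ω' γ δ : Type} [Fintype Ω] [Fintype Ω'] [Fintype γ] [DecidableEq γ]
  [Fintype δ] [DecidableEq δ]

lemma IsPmf.comp_equiv {p : Ω' → ℝ} (hp : IsPmf p) (e : Ω ≃ Ω') : IsPmf (p ∘ e) :=
  ⟨fun ω => hp.1 (e ω), (e.sum_comp p).trans hp.2⟩

lemma sum_distOf_s12 {p : Ω → ℝ} (hp : IsPmf p) (f : Ω → γ) : ∑ c, distOf p f c = 1 := by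
  unfold distOf
  rw [Finset.sum_comm]
  simpa using hp.2

lemma exists_eq_of_distOf_ne_zero {p : Ω → ℝ} {f : Ω → γ} {c : γ} (h : distOf p f c ≠ 0) :
    ∃ ω, f ω = c := by
  by_contra! hc
  exact h (Finset.sum_eq_zero fun ω _ => if_neg (hc ω))

lemma distOf_comp_equiv (p : Ω' → ℝ) (e : Ω ≃ Ω') (f : Ω' → γ) :
    distOf (p ∘ e) (f ∘ e) = distOf p f :=
  funext fun c => e.sum_comp fun ω => if f ω = c then p ω else 0

lemma ent_comp_equiv (p : Ω' → ℝ) (e : Ω ≃ Ω') (f : Ω' → γ) :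
    ent (p ∘ e) (f ∘ e) = ent p f := by
  rw [ent, distOf_comp_equiv, ent]

lemma distOf_comp (p : Ω → ℝ) (f : Ω → γ) (g : γ → δ) (d : δ) :
    distOf p (fun ω => g (f ω)) d = ∑ c, if g c = d then distOf p f c else 0 := by
  classical
  unfold distOf
  simp only [← Finset.sum_filter]
  rw [← Finset.sum_biUnion]
  · congr 1
    ext ω
    simp
  · intro c _ c' _ hcc'
    simp only [Function.onFun]
    exact Finset.disjoint_filter.2 fun ω _ h h' => hcc' (h.symm.trans h')

lemma distOf_comp_eq_of_distOf_eq {p : Ω → ℝ} {p' : Ω' → ℝ} {f : Ω → γ} {f' : Ω' → γ}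
    (h : distOf p f = distOf p' f') (g : γ → δ) :
    distOf p (fun ω => g (f ω)) = distOf p' (fun ω => g (f' ω)) :=
  funext fun d => by rw [distOf_comp, distOf_comp, h]

lemma ent_comp_injective (p : Ω → ℝ) (f : Ω → γ) {g : γ → δ} (hg : Function.Injective g) :
    ent p (fun ω => g (f ω)) = ent p f := by
  have hzero : ∀ d ∉ Finset.univ.image g, distOf p (fun ω => g (f ω)) d = 0 := fun d hd =>
    Finset.sum_eq_zero fun ω _ => if_neg fun (h : g (f ω) = d) =>
      hd (h ▸ Finset.mem_image_of_mem g (mem_univ (f ω)))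
  unfold ent
  rw [← Finset.sum_subset (Finset.subset_univ (Finset.univ.image g))
      fun d _ hd => by simp [hzero d hd], Finset.sum_image fun a _ b _ h => hg h]
  simp only [distOf, hg.eq_iff]

end Entropy

def mixPmf {Ω₁ Ω₂ : Type} (l μ : ℝ) (q₁ : Ω₁ → ℝ) (q₂ : Ω₂ → ℝ) : Ω₁ ⊕ Ω₂ → ℝ :=
  Sum.elim (fun ω => l * q₁ ω) (fun ω => μ * q₂ ω)

section Mixture
variable {Ω₁ Ω₂ γ : Type} [Fintype Ω₁] [Fintype Ω₂] [Fintype γ] [DecidableEq γ]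
  {l μ : ℝ} {q₁ : Ω₁ → ℝ} {q₂ : Ω₂ → ℝ}

lemma distOf_mixPmf (f : Ω₁ ⊕ Ω₂ → γ) (c : γ) :
    distOf (mixPmf l μ q₁ q₂) f c
      = l * distOf q₁ (fun ω => f (.inl ω)) c + μ * distOf q₂ (fun ω => f (.inr ω)) c := by
  simp only [distOf, Fintype.sum_sum_type, Finset.mul_sum, mixPmf, Sum.elim_inl, Sum.elim_inr,
    mul_ite, mul_zero]

lemma isPmf_mixPmf (hq₁ : IsPmf q₁) (hq₂ : IsPmf q₂) (hl : 0 ≤ l) (hμ : 0 ≤ μ)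
    (hlμ : l + μ = 1) : IsPmf (mixPmf l μ q₁ q₂) := by
  refine ⟨Sum.rec (fun ω => mul_nonneg hl (hq₁.1 ω)) (fun ω => mul_nonneg hμ (hq₂.1 ω)), ?_⟩
  simp only [mixPmf, Fintype.sum_sum_type, Sum.elim_inl, Sum.elim_inr, ← Finset.mul_sum, hq₁.2,
    hq₂.2, mul_one, hlμ]

lemma distOf_mixPmf_of_distOf_eq (hlμ : l + μ = 1) {f : Ω₁ ⊕ Ω₂ → γ}
    (hf : distOf q₁ (fun ω => f (.inl ω)) = distOf q₂ (fun ω => f (.inr ω))) :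
    distOf (mixPmf l μ q₁ q₂) f = distOf q₁ (fun ω => f (.inl ω)) := by
  funext c
  rw [distOf_mixPmf, ← hf]
  linear_combination distOf q₁ (fun ω => f (.inl ω)) c * hlμ

lemma ent_mixPmf_of_distOf_eq (hlμ : l + μ = 1) {f : Ω₁ ⊕ Ω₂ → γ}
    (hf : distOf q₁ (fun ω => f (.inl ω)) = distOf q₂ (fun ω => f (.inr ω))) :
    ent (mixPmf l μ q₁ q₂) f
      = l * ent q₁ (fun ω => f (.inl ω)) + μ * ent q₂ (fun ω => f (.inr ω)) := by
  have hmix : ent (mixPmf l μ q₁ q₂) f = ent q₁ (fun ω => f (.inl ω)) := by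
    simp only [ent, distOf_mixPmf_of_distOf_eq hlμ hf]
  have h₂ : ent q₂ (fun ω => f (.inr ω)) = ent q₁ (fun ω => f (.inl ω)) := by
    simp only [ent, hf]
  rw [hmix, h₂, ← add_mul, hlμ, one_mul]

/-- Grouping rule: the extra term is the entropy of the coin. -/
lemma ent_mixPmf_of_disjoint (hq₁ : IsPmf q₁) (hq₂ : IsPmf q₂) {f : Ω₁ ⊕ Ω₂ → γ}
    (hf : ∀ ω₁ ω₂, f (.inl ω₁) ≠ f (.inr ω₂)) :
    ent (mixPmf l μ q₁ q₂) f
      = l * ent q₁ (fun ω => f (.inl ω)) + μ * ent q₂ (fun ω => f (.inr ω))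
        + (negMulLog l + negMulLog μ) := by
  simp only [ent, distOf_mixPmf]
  set d₁ := distOf q₁ (fun ω => f (.inl ω))
  set d₂ := distOf q₂ (fun ω => f (.inr ω))
  have hdisj : ∀ c, d₁ c = 0 ∨ d₂ c = 0 := by
    intro c
    by_contra! h
    obtain ⟨ω₁, rfl⟩ := exists_eq_of_distOf_ne_zero h.1
    obtain ⟨ω₂, h₂⟩ := exists_eq_of_distOf_ne_zero h.2
    exact hf ω₁ ω₂ h₂.symm
  have hsplit : ∀ c, negMulLog (l * d₁ c + μ * d₂ c)
      = d₁ c * negMulLog l + l * negMulLog (d₁ c) + (d₂ c * negMulLog μ + μ * negMulLog (d₂ c)) :=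
    fun c => by rcases hdisj c with h | h <;> simp [h, negMulLog_mul]
  simp only [hsplit, Finset.sum_add_distrib, ← Finset.sum_mul, ← Finset.mul_sum]
  rw [sum_distOf_s12 hq₁, sum_distOf_s12 hq₂]
  ring

end Mixture

section ConditionalMutualInformation
variable {Ω Ω' α β ζ α' β' ζ' : Type} [Fintype Ω] [Fintype Ω']
  [Fintype α] [DecidableEq α] [Fintype β] [DecidableEq β] [Fintype ζ] [DecidableEq ζ]
  [Fintype α'] [DecidableEq α'] [Fintype β'] [DecidableEq β'] [Fintype ζ'] [DecidableEq ζ']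

lemma cmi_comp_equiv (p : Ω' → ℝ) (e : Ω ≃ Ω') (A : Ω' → α) (B : Ω' → β) (C : Ω' → ζ) :
    cmi (p ∘ e) (A ∘ e) (B ∘ e) (C ∘ e) = cmi p A B C := by
  unfold cmi
  rw [← ent_comp_equiv p e (fun ω => (A ω, C ω)), ← ent_comp_equiv p e (fun ω => (B ω, C ω)),
    ← ent_comp_equiv p e (fun ω => (A ω, B ω, C ω)), ← ent_comp_equiv p e C]
  rfl

lemma cmi_comp_injective (p : Ω → ℝ) (A : Ω → α) (B : Ω → β) (C : Ω → ζ) {φ : α → α'}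
    {ψ : β → β'} {χ : ζ → ζ'} (hφ : φ.Injective) (hψ : ψ.Injective) (hχ : χ.Injective) :
    cmi p (fun ω => φ (A ω)) (fun ω => ψ (B ω)) (fun ω => χ (C ω)) = cmi p A B C := by
  unfold cmi
  rw [← ent_comp_injective p (fun ω => (A ω, C ω)) (hφ.prodMap hχ),
    ← ent_comp_injective p (fun ω => (B ω, C ω)) (hψ.prodMap hχ),
    ← ent_comp_injective p (fun ω => (A ω, B ω, C ω)) (hφ.prodMap (hψ.prodMap hχ)),
    ← ent_comp_injective p C hχ]
  rfl

end ConditionalMutualInformation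

section MixtureCmi
variable {Ω₁ Ω₂ α β ζ : Type} [Fintype Ω₁] [Fintype Ω₂]
  [Fintype α] [DecidableEq α] [Fintype β] [DecidableEq β] [Fintype ζ] [DecidableEq ζ]
  {l μ : ℝ} {q₁ : Ω₁ → ℝ} {q₂ : Ω₂ → ℝ} {A : Ω₁ ⊕ Ω₂ → α} {B : Ω₁ ⊕ Ω₂ → β} {Z : Ω₁ ⊕ Ω₂ → ζ}

lemma cmi_mixPmf_of_reveals (hq₁ : IsPmf q₁) (hq₂ : IsPmf q₂)
    (hZ : ∀ ω₁ ω₂, Z (.inl ω₁) ≠ Z (.inr ω₂)) :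
    cmi (mixPmf l μ q₁ q₂) A B Z
      = l * cmi q₁ (fun ω => A (.inl ω)) (fun ω => B (.inl ω)) (fun ω => Z (.inl ω))
        + μ * cmi q₂ (fun ω => A (.inr ω)) (fun ω => B (.inr ω)) (fun ω => Z (.inr ω)) := by
  simp only [cmi]
  rw [ent_mixPmf_of_disjoint hq₁ hq₂ (f := fun ω => (A ω, Z ω))
      fun _ _ h => hZ _ _ (congrArg Prod.snd h),
    ent_mixPmf_of_disjoint hq₁ hq₂ (f := fun ω => (B ω, Z ω))
      fun _ _ h => hZ _ _ (congrArg Prod.snd h),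
    ent_mixPmf_of_disjoint hq₁ hq₂ (f := fun ω => (A ω, B ω, Z ω))
      fun _ _ h => hZ _ _ (congrArg (·.2.2) h),
    ent_mixPmf_of_disjoint hq₁ hq₂ hZ]
  ring

lemma cmi_mixPmf_of_reveals_of_distOf_eq (hlμ : l + μ = 1) (hq₁ : IsPmf q₁) (hq₂ : IsPmf q₂)
    (hZ : ∀ ω₁ ω₂, Z (.inl ω₁) ≠ Z (.inr ω₂))
    (hAB : distOf q₁ (fun ω => (A (.inl ω), B (.inl ω)))
      = distOf q₂ (fun ω => (A (.inr ω), B (.inr ω)))) :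
    cmi (mixPmf l μ q₁ q₂) A Z B
      = l * cmi q₁ (fun ω => A (.inl ω)) (fun ω => Z (.inl ω)) (fun ω => B (.inl ω))
        + μ * cmi q₂ (fun ω => A (.inr ω)) (fun ω => Z (.inr ω)) (fun ω => B (.inr ω)) := by
  simp only [cmi]
  rw [ent_mixPmf_of_distOf_eq hlμ hAB,
    ent_mixPmf_of_distOf_eq hlμ (distOf_comp_eq_of_distOf_eq hAB Prod.snd),
    ent_mixPmf_of_disjoint hq₁ hq₂ (f := fun ω => (Z ω, B ω))
      fun _ _ h => hZ _ _ (congrArg Prod.fst h),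
    ent_mixPmf_of_disjoint hq₁ hq₂ (f := fun ω => (A ω, Z ω, B ω))
      fun _ _ h => hZ _ _ (congrArg (·.2.1) h)]
  ring

end MixtureCmi

section TimeSharing
variable {α β γ δ : Type} {m₁ m₂ : ℕ} {l μ : ℝ}
  {q₁ : α × β × Fin m₁ → ℝ} {q₂ : α × β × Fin m₂ → ℝ}

def sumProdFinEquiv (α β : Type) (m₁ m₂ : ℕ) :
    (α × β × Fin m₁) ⊕ (α × β × Fin m₂) ≃ α × β × Fin (m₁ + m₂) :=
  (Equiv.prodSumDistrib α _ _).symm.trans <|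
    (Equiv.prodCongr (.refl α) (Equiv.prodSumDistrib β _ _).symm).trans <|
      .prodCongr (.refl α) (.prodCongr (.refl β) finSumFinEquiv)

lemma sumProdFinEquiv_inl (w : α × β × Fin m₁) :
    sumProdFinEquiv α β m₁ m₂ (.inl w) = (w.1, w.2.1, Fin.castAdd m₂ w.2.2) :=
  rfl

lemma sumProdFinEquiv_inr (w : α × β × Fin m₂) :
    sumProdFinEquiv α β m₁ m₂ (.inr w) = (w.1, w.2.1, Fin.natAdd m₁ w.2.2) :=
  rfl

lemma sumProdFinEquiv_inl_ne_inr (w₁ : α × β × Fin m₁) (w₂ : α × β × Fin m₂) :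
    (sumProdFinEquiv α β m₁ m₂ (.inl w₁)).2.2 ≠ (sumProdFinEquiv α β m₁ m₂ (.inr w₂)).2.2 := by
  rw [sumProdFinEquiv_inl, sumProdFinEquiv_inr, Ne, Fin.ext_iff, Fin.val_castAdd, Fin.val_natAdd]
  omega

/-- The auxiliary variable of the mixture takes values in `Fin m₁ ⊕ Fin m₂ ≃ Fin (m₁ + m₂)`,
so it reveals the coin. -/
def timeShare (l μ : ℝ) (q₁ : α × β × Fin m₁ → ℝ) (q₂ : α × β × Fin m₂ → ℝ) :
    α × β × Fin (m₁ + m₂) → ℝ :=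
  mixPmf l μ q₁ q₂ ∘ (sumProdFinEquiv α β m₁ m₂).symm

lemma timeShare_comp_sumProdFinEquiv :
    timeShare l μ q₁ q₂ ∘ sumProdFinEquiv α β m₁ m₂ = mixPmf l μ q₁ q₂ := by
  simp [timeShare, Function.comp_assoc]

variable [Fintype α] [Fintype β]

lemma isPmf_timeShare (hq₁ : IsPmf q₁) (hq₂ : IsPmf q₂) (hl : 0 ≤ l) (hμ : 0 ≤ μ)
    (hlμ : l + μ = 1) : IsPmf (timeShare l μ q₁ q₂) :=
  (isPmf_mixPmf hq₁ hq₂ hl hμ hlμ).comp_equiv _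

variable [Fintype γ] [DecidableEq γ] [Fintype δ] [DecidableEq δ]

lemma cmi_timeShare_given (hq₁ : IsPmf q₁) (hq₂ : IsPmf q₂) (G : α × β → γ) (H : α × β → δ) :
    cmi (timeShare l μ q₁ q₂) (fun w => G (w.1, w.2.1)) (fun w => H (w.1, w.2.1)) (fun w => w.2.2)
      = l * cmi q₁ (fun w => G (w.1, w.2.1)) (fun w => H (w.1, w.2.1)) (fun w => w.2.2)
        + μ * cmi q₂ (fun w => G (w.1, w.2.1)) (fun w => H (w.1, w.2.1)) (fun w => w.2.2) := by
  rw [← cmi_comp_equiv _ (sumProdFinEquiv α β m₁ m₂), timeShare_comp_sumProdFinEquiv,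
    cmi_mixPmf_of_reveals hq₁ hq₂ sumProdFinEquiv_inl_ne_inr]
  simp only [Function.comp_apply, sumProdFinEquiv_inl, sumProdFinEquiv_inr]
  exact congrArg₂ (fun a b => l * a + μ * b)
    (cmi_comp_injective (φ := id) (ψ := id) q₁ _ _ _ Function.injective_id Function.injective_id
      (Fin.castAdd_injective m₁ m₂))
    (cmi_comp_injective (φ := id) (ψ := id) q₂ _ _ _ Function.injective_id Function.injective_id
      (Fin.natAdd_injective m₂ m₁))

variable [DecidableEq α] [DecidableEq β]

lemma distOf_timeShare_fst_snd (hlμ : l + μ = 1)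
    (hE : distOf q₁ (fun w => (w.1, w.2.1)) = distOf q₂ (fun w => (w.1, w.2.1))) :
    distOf (timeShare l μ q₁ q₂) (fun w => (w.1, w.2.1)) = distOf q₁ (fun w => (w.1, w.2.1)) := by
  rw [← distOf_comp_equiv _ (sumProdFinEquiv α β m₁ m₂), timeShare_comp_sumProdFinEquiv]
  exact distOf_mixPmf_of_distOf_eq hlμ hE

lemma cmi_timeShare_cond (hlμ : l + μ = 1) (hq₁ : IsPmf q₁) (hq₂ : IsPmf q₂)
    (hE : distOf q₁ (fun w => (w.1, w.2.1)) = distOf q₂ (fun w => (w.1, w.2.1)))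
    (G : α × β → γ) (H : α × β → δ) :
    cmi (timeShare l μ q₁ q₂) (fun w => G (w.1, w.2.1)) (fun w => w.2.2) (fun w => H (w.1, w.2.1))
      = l * cmi q₁ (fun w => G (w.1, w.2.1)) (fun w => w.2.2) (fun w => H (w.1, w.2.1))
        + μ * cmi q₂ (fun w => G (w.1, w.2.1)) (fun w => w.2.2) (fun w => H (w.1, w.2.1)) := by
  rw [← cmi_comp_equiv _ (sumProdFinEquiv α β m₁ m₂), timeShare_comp_sumProdFinEquiv,
    cmi_mixPmf_of_reveals_of_distOf_eq hlμ hq₁ hq₂ sumProdFinEquiv_inl_ne_inr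
      (distOf_comp_eq_of_distOf_eq hE fun xy => (G xy, H xy))]
  simp only [Function.comp_apply, sumProdFinEquiv_inl, sumProdFinEquiv_inr]
  exact congrArg₂ (fun a b => l * a + μ * b)
    (cmi_comp_injective (φ := id) (χ := id) q₁ _ _ _ Function.injective_id
      (Fin.castAdd_injective m₁ m₂) Function.injective_id)
    (cmi_comp_injective (φ := id) (χ := id) q₂ _ _ _ Function.injective_id
      (Fin.natAdd_injective m₂ m₁) Function.injective_id)

end TimeSharing

theorem stmt12_general {Ω α β : Type} [Fintype Ω]
    [Fintype α] [DecidableEq α] [Fintype β] [DecidableEq β]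
    (p : Ω → ℝ) (X : Ω → α) (Y : Ω → β) :
    Convex ℝ (tension p X Y) := by
  rintro _ ⟨m₁, q₁, hq₁, hm₁, rfl⟩ _ ⟨m₂, q₂, hq₂, hm₂, rfl⟩ l μ hl hμ hlμ
  have hE := hm₁.trans hm₂.symm
  refine ⟨m₁ + m₂, timeShare l μ q₁ q₂, isPmf_timeShare hq₁ hq₂ hl hμ hlμ,
    (distOf_timeShare_fst_snd hlμ hE).trans hm₁, ?_⟩
  rw [cmi_timeShare_cond hlμ hq₁ hq₂ hE Prod.fst Prod.snd,
    cmi_timeShare_cond hlμ hq₁ hq₂ hE Prod.snd Prod.fst,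
    cmi_timeShare_given hq₁ hq₂ Prod.fst Prod.snd]
  rfl

/-- The tension region `T(X;Y)` is a convex subset of `ℝ³`. -/
theorem stmt12 {Ω α β : Type} [Fintype Ω]
    [Fintype α] [DecidableEq α] [Fintype β] [DecidableEq β]
    (p : Ω → ℝ) (hp : IsPmf p) (X : Ω → α) (Y : Ω → β) :
    Convex ℝ (tension p X Y) :=
  stmt12_general p X Y
end

section
/- If the joint probability matrix of finitely supported (X,Y) is not, after restriction to each connected component of its block graph, a product distribution on a combinatorial rectangle, then there exist indices i₁ ≠ i₂, j₁ ≠ j₂ such that, writing α = p(i₁,j₁), β = p(i₁,j₂), γ = p(i₂,j₁), δ = p(i₂,j₂), either (α, β, γ > 0 and δ = 0) or (α, β, γ, δ > 0 and αδ ≠ βγ). -/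
open Real BigOperators Finset

/-- One step in the block graph: two support points in the same row or
column. -/
def blockStep {α β : Type} (f : α × β → ℝ) (u v : α × β) : Prop :=
  0 < f u ∧ 0 < f v ∧ (u.1 = v.1 ∨ u.2 = v.2)

/-!
Proof idea: if no bad `2×2` configuration exists, every L-shape of three positive entries
`p(i₁,j₁), p(i₁,j₂), p(i₂,j₁)` completes to a positive `2×2` with `αδ = βγ`. Following a
block-graph path from `u`, the rectangle spanned by `u` and the current point `v` then stays
positive and of rank one: when `v` moves to `w` along a row or column, the L-shape at `v` with
arms towards `w` and towards `u` gives the new corner, and cancelling the positive factor `p v`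
gives the new rank-one identity.
-/

section BlockGraph

variable {α β : Type} (p : α × β → ℝ)

def CompletesLShapes : Prop :=
  ∀ i₁ i₂ j₁ j₂, 0 < p (i₁, j₁) → 0 < p (i₁, j₂) → 0 < p (i₂, j₁) →
    0 < p (i₂, j₂) ∧ p (i₁, j₁) * p (i₂, j₂) = p (i₁, j₂) * p (i₂, j₁)

def PositiveRankOneRect (u v : α × β) : Prop :=
  0 < p (u.1, v.2) ∧ 0 < p (v.1, u.2) ∧ p u * p v = p (u.1, v.2) * p (v.1, u.2)

variable {p}

theorem completesLShapes_of_not_exists (hp : ∀ x, 0 ≤ p x)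
    (h : ¬ ∃ (i₁ i₂ : α) (j₁ j₂ : β), i₁ ≠ i₂ ∧ j₁ ≠ j₂ ∧
      ((0 < p (i₁, j₁) ∧ 0 < p (i₁, j₂) ∧ 0 < p (i₂, j₁) ∧ p (i₂, j₂) = 0) ∨
       (0 < p (i₁, j₁) ∧ 0 < p (i₁, j₂) ∧ 0 < p (i₂, j₁) ∧ 0 < p (i₂, j₂) ∧
        p (i₁, j₁) * p (i₂, j₂) ≠ p (i₁, j₂) * p (i₂, j₁)))) :
    CompletesLShapes p := by
  intro i₁ i₂ j₁ j₂ h₁₁ h₁₂ h₂₁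
  by_cases hi : i₁ = i₂
  · subst hi
    exact ⟨h₁₂, mul_comm _ _⟩
  by_cases hj : j₁ = j₂
  · subst hj
    exact ⟨h₂₁, rfl⟩
  obtain h₂₂ | h₂₂ := (hp (i₂, j₂)).lt_or_eq
  · exact ⟨h₂₂, by_contra fun hne => h ⟨i₁, i₂, j₁, j₂, hi, hj, .inr ⟨h₁₁, h₁₂, h₂₁, h₂₂, hne⟩⟩⟩
  · exact (h ⟨i₁, i₂, j₁, j₂, hi, hj, .inl ⟨h₁₁, h₁₂, h₂₁, h₂₂.symm⟩⟩).elim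

theorem PositiveRankOneRect.refl {u : α × β} (hu : 0 < p u) : PositiveRankOneRect p u u :=
  ⟨hu, hu, mul_comm _ _⟩

theorem PositiveRankOneRect.step_row (hp : CompletesLShapes p) {i k : α} {j l l' : β}
    (h : PositiveRankOneRect p (i, j) (k, l)) (hkl : 0 < p (k, l)) (hkl' : 0 < p (k, l')) :
    PositiveRankOneRect p (i, j) (k, l') := by
  obtain ⟨hil, hkj, hrect⟩ := h
  obtain ⟨hil', hcorner⟩ := hp k i l l' hkl hkl' hil
  refine ⟨hil', hkj, mul_left_cancel₀ hkl.ne' ?_⟩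
  calc p (k, l) * (p (i, j) * p (k, l')) = p (i, j) * p (k, l) * p (k, l') := by ring
    _ = p (i, l) * p (k, j) * p (k, l') := by rw [hrect]
    _ = p (k, l) * p (i, l') * p (k, j) := by rw [hcorner]; ring
    _ = p (k, l) * (p (i, l') * p (k, j)) := by ring

theorem PositiveRankOneRect.step_col (hp : CompletesLShapes p) {i k k' : α} {j l : β}
    (h : PositiveRankOneRect p (i, j) (k, l)) (hkl : 0 < p (k, l)) (hk'l : 0 < p (k', l)) :
    PositiveRankOneRect p (i, j) (k', l) := by
  obtain ⟨hil, hkj, hrect⟩ := h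
  obtain ⟨hk'j, hcorner⟩ := hp k k' l j hkl hkj hk'l
  refine ⟨hil, hk'j, mul_left_cancel₀ hkl.ne' ?_⟩
  calc p (k, l) * (p (i, j) * p (k', l)) = p (i, j) * p (k, l) * p (k', l) := by ring
    _ = p (i, l) * p (k, j) * p (k', l) := by rw [hrect]
    _ = p (i, l) * (p (k, l) * p (k', j)) := by rw [hcorner]; ring
    _ = p (k, l) * (p (i, l) * p (k', j)) := by ring

theorem positiveRankOneRect_of_reflTransGen (hp : CompletesLShapes p) {u v : α × β}
    (hu : 0 < p u) (huv : Relation.ReflTransGen (blockStep p) u v) :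
    PositiveRankOneRect p u v := by
  induction huv with
  | refl => exact .refl hu
  | @tail b c _ hbc ih =>
    obtain ⟨hb, hc, hrow | hcol⟩ := hbc
    · obtain ⟨k, l⟩ := b
      obtain ⟨k', l'⟩ := c
      obtain rfl : k = k' := hrow
      exact ih.step_row hp hb hc
    · obtain ⟨k, l⟩ := b
      obtain ⟨k', l'⟩ := c
      obtain rfl : l = l' := hcol
      exact ih.step_col hp hb hc

end BlockGraph

theorem stmt17_general {α β : Type} [Fintype α] [Fintype β]
    (p : α × β → ℝ) (hp : IsPmf p)
    (h : ¬ (∀ u v : α × β, 0 < p u → 0 < p v →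
      Relation.ReflTransGen (blockStep p) u v →
      0 < p (u.1, v.2) ∧ p u * p v = p (u.1, v.2) * p (v.1, u.2))) :
    ∃ (i₁ i₂ : α) (j₁ j₂ : β), i₁ ≠ i₂ ∧ j₁ ≠ j₂ ∧
      ((0 < p (i₁, j₁) ∧ 0 < p (i₁, j₂) ∧ 0 < p (i₂, j₁) ∧ p (i₂, j₂) = 0) ∨
       (0 < p (i₁, j₁) ∧ 0 < p (i₁, j₂) ∧ 0 < p (i₂, j₁) ∧ 0 < p (i₂, j₂) ∧
        p (i₁, j₁) * p (i₂, j₂) ≠ p (i₁, j₂) * p (i₂, j₁))) := by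
  by_contra hc
  apply h
  intro u v hu _ huv
  obtain ⟨hcorner, -, hrect⟩ :=
    positiveRankOneRect_of_reflTransGen (completesLShapes_of_not_exists hp.1 hc) hu huv
  exact ⟨hcorner, hrect⟩

/-- If the joint pmf of `(X,Y)` is not, on each connected component of its
block graph, a product distribution on a combinatorial rectangle, then there
is a `2×2` configuration with `α, β, γ > 0, δ = 0`, or with all four entries
positive and `αδ ≠ βγ`. -/
theorem stmt17 {α β : Type} [Fintype α] [DecidableEq α] [Fintype β] [DecidableEq β]
    (p : α × β → ℝ) (hp : IsPmf p)
    (h : ¬ (∀ u v : α × β, 0 < p u → 0 < p v →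
      Relation.ReflTransGen (blockStep p) u v →
      0 < p (u.1, v.2) ∧ p u * p v = p (u.1, v.2) * p (v.1, u.2))) :
    ∃ (i₁ i₂ : α) (j₁ j₂ : β), i₁ ≠ i₂ ∧ j₁ ≠ j₂ ∧
      ((0 < p (i₁, j₁) ∧ 0 < p (i₁, j₂) ∧ 0 < p (i₂, j₁) ∧ p (i₂, j₂) = 0) ∨
       (0 < p (i₁, j₁) ∧ 0 < p (i₁, j₂) ∧ 0 < p (i₂, j₁) ∧ 0 < p (i₂, j₂) ∧
        p (i₁, j₁) * p (i₂, j₂) ≠ p (i₁, j₂) * p (i₂, j₁))) :=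
  stmt17_general p hp h
end
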